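/- arXiv:math/0203266 — 10 statements merged into one kernel-verified Lean document; each statement's English description precedes it below -/
import Mathlib

section
/- Let A be a commutative unital complex Banach algebra whose Gelfand transform has dense range in C(Ω), where Ω is the character space (maximal ideal space) of A and C(Ω) carries the uniform norm. Give the image algebra Â = {â : a ∈ A} ⊆ C(Ω) the uniform norm. Then the set of elements of Â that are invertible in Â is dense in Â (with respect to the uniform norm) if and only if the set of invertible elements of C(Ω) is dense in C(Ω). -/
open WeakDual

lemma isUnit_range_iff (A : Type*) [NormedCommRing A] [NormedAlgebra ℂ A] [CompleteSpace A]
    (f : (gelfandTransform ℂ A).range) :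
    IsUnit f ↔ IsUnit (f : C(characterSpace ℂ A, ℂ)) := by
  constructor
  · intro h
    exact h.map (Subalgebra.val _)
  · rintro h
    obtain ⟨a, ha⟩ := f.2
    have ha' : IsUnit a := by
      rw [← spectrum.zero_notMem_iff ℂ, ← spectrum.gelfandTransform_eq, show (gelfandTransform ℂ A) a = (f : C(characterSpace ℂ A, ℂ)) from ha,
        spectrum.zero_notMem_iff]
      exact h
    have := ha'.map ((gelfandTransform ℂ A).rangeRestrict)
    convert this using 1
    ext1
    simpa using ha.symm


/-- For a commutative unital complex Banach algebra `A` whose Gelfand transform has dense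
range in `C(Ω)` (where `Ω` is the character space of `A`), the image algebra `Â` (with the
uniform norm, i.e. the topology induced from `C(Ω)`) has dense invertible group if and only
if `C(Ω)` has dense invertible group. -/
theorem gelfand_image_dense_invertibles_iff
    (A : Type*) [NormedCommRing A] [NormedAlgebra ℂ A] [CompleteSpace A]
    (hdense : DenseRange (gelfandTransform ℂ A)) :
    Dense {f : (gelfandTransform ℂ A).range | IsUnit f} ↔
      Dense {f : C(characterSpace ℂ A, ℂ) | IsUnit f} := by
  constructor
  · intro h
    rw [Metric.dense_iff]
    intro g r hr
    obtain ⟨a, ha⟩ := Metric.denseRange_iff.mp hdense g (r / 2) (by linarith)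
    obtain ⟨u, hu, hu'⟩ := Metric.dense_iff.mp h
      ⟨gelfandTransform ℂ A a, ⟨a, rfl⟩⟩ (r / 2) (by linarith)
    refine ⟨(u : C(characterSpace ℂ A, ℂ)), ?_, (isUnit_range_iff A u).mp hu'⟩
    rw [Metric.mem_ball] at hu ⊢
    rw [Subtype.dist_eq] at hu
    calc dist (u : C(characterSpace ℂ A, ℂ)) g
        ≤ dist (u : C(characterSpace ℂ A, ℂ)) (gelfandTransform ℂ A a)
            + dist (gelfandTransform ℂ A a) g := dist_triangle _ _ _
      _ < r / 2 + r / 2 := add_lt_add hu (dist_comm g _ ▸ ha)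
      _ = r := by ring
  · intro h
    rw [Metric.dense_iff]
    intro f r hr
    obtain ⟨u, hu, hu'⟩ := Metric.dense_iff.mp h (f : C(characterSpace ℂ A, ℂ)) (r / 2)
      (by linarith)
    rw [Metric.mem_ball] at hu
    obtain ⟨δ, hδ, hδ'⟩ := Metric.isOpen_iff.mp Units.isOpen u hu'
    have hε : 0 < min δ (r - dist u (f : C(characterSpace ℂ A, ℂ))) := by
      apply lt_min hδ; linarith
    obtain ⟨a, ha⟩ := Metric.denseRange_iff.mp hdense u _ hε
    refine ⟨⟨gelfandTransform ℂ A a, ⟨a, rfl⟩⟩, ?_, ?_⟩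
    · rw [Metric.mem_ball, Subtype.dist_eq]
      calc dist (gelfandTransform ℂ A a) (f : C(characterSpace ℂ A, ℂ))
          ≤ dist (gelfandTransform ℂ A a) u + dist u (f : C(characterSpace ℂ A, ℂ)) :=
            dist_triangle _ _ _
        _ < min δ (r - dist u (f : C(characterSpace ℂ A, ℂ)))
              + dist u (f : C(characterSpace ℂ A, ℂ)) := by rw [dist_comm]; linarith [ha]
        _ ≤ r := by
            have := min_le_right δ (r - dist u (f : C(characterSpace ℂ A, ℂ)))
            linarith
    · rw [Set.mem_setOf_eq, isUnit_range_iff]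
      exact hδ' (by simpa [Metric.mem_ball] using dist_comm u _ ▸ lt_of_lt_of_le ha (min_le_left _ _))
end

section
/- Let A be a unital complex Banach algebra and let B be a subalgebra of A (with the norm induced from A) that is dense in A and full in A, meaning that every element of B that is invertible in A is invertible in B. Then the set of elements of B invertible in B is dense in B if and only if the set of invertible elements of A is dense in A. -/
/-- If `B` is a dense full subalgebra of a unital complex Banach algebra `A`, then the
elements of `B` invertible in `B` are dense in `B` if and only if the invertible elements
of `A` are dense in `A`. -/
theorem dense_full_subalgebra_dense_invertibles_iff
    (A : Type*) [NormedRing A] [NormedAlgebra ℂ A] [CompleteSpace A]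
    (B : Subalgebra ℂ A) (hBdense : Dense (B : Set A))
    (hfull : ∀ b : B, IsUnit (b : A) → IsUnit b) :
    Dense {b : B | IsUnit b} ↔ Dense {a : A | IsUnit a} := by
  constructor
  · intro h
    rw [Metric.dense_iff] at h ⊢
    intro a ε hε
    obtain ⟨x, hx, hxB⟩ := Metric.dense_iff.mp hBdense a (ε / 2) (by linarith)
    set b : B := ⟨x, hxB⟩ with hb
    obtain ⟨u, hu, hu'⟩ := h b (ε / 2) (by linarith)
    refine ⟨(u : A), ?_, hu'.map B.subtype⟩
    rw [Metric.mem_ball] at hx ⊢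
    have hd : dist (u : A) (b : A) = dist u b := rfl
    calc dist (u : A) a ≤ dist (u : A) (b : A) + dist (b : A) a := dist_triangle _ _ _
      _ < ε / 2 + ε / 2 := by
          rw [hd]
          have := Metric.mem_ball.mp hu
          exact add_lt_add this hx
      _ = ε := by ring
  · intro h
    rw [Metric.dense_iff] at h ⊢
    intro b ε hε
    obtain ⟨a, ha, ha'⟩ := h (b : A) (ε / 2) (by linarith)
    obtain ⟨δ, hδ, hball⟩ := Metric.isOpen_iff.mp Units.isOpen a ha'
    obtain ⟨x, hx, hxB⟩ := Metric.dense_iff.mp hBdense a (min δ (ε / 2))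
      (lt_min hδ (by linarith))
    set c : B := ⟨x, hxB⟩ with hc
    rw [Metric.mem_ball] at hx
    refine ⟨c, Metric.mem_ball.mpr ?_, hfull c (hball (Metric.mem_ball.mpr (lt_of_lt_of_le hx (min_le_left _ _))))⟩
    have hd : dist c b = dist (c : A) (b : A) := rfl
    calc dist c b = dist (c : A) (b : A) := hd
      _ ≤ dist (c : A) a + dist a (b : A) := dist_triangle _ _ _
      _ < ε / 2 + ε / 2 := add_lt_add (lt_of_lt_of_le hx (min_le_right _ _))
          (Metric.mem_ball.mp ha)
      _ = ε := by ring
end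

section
/- Let A be a unital complex Banach algebra in which the set of invertible elements is dense, and let n be a positive natural number. Then the set of invertible elements of the matrix algebra Mₙ(A) of n×n matrices over A is dense in Mₙ(A) (with respect to the topology of entrywise convergence, equivalently with respect to any Banach algebra norm on Mₙ(A), such as the ℓ∞-operator norm). -/
/-!
Induct on the size, splitting off one row and column. A block matrix `[[a, b], [c, d]]` whose
corner `a` is invertible factors as `[[1, 0], [c a⁻¹, 1]] * [[a, b], [0, d - c a⁻¹ b]]`; the first
factor is invertible, and the second one is a limit of invertibles because the Schur complement
`d - c a⁻¹ b` is a limit of invertibles. Such matrices are dense, since the corner ranges over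
the dense set of invertibles.
-/

open Set Matrix

theorem Dense.setOf_isUnit_of_denseRange {M N : Type*} [Monoid M] [Monoid N]
    [TopologicalSpace M] [TopologicalSpace N] {f : M →* N} (hdense : DenseRange f)
    (hf : Continuous f) (h : Dense {a : M | IsUnit a}) : Dense {b : N | IsUnit b} :=
  (hdense.dense_image hf h).mono <| image_subset_iff.2 fun _ ha => ha.map f

theorem Dense.range_subset_closure_of_mapsTo {X Y : Type*} [TopologicalSpace X]
    [TopologicalSpace Y] {f : X → Y} {s : Set X} {t : Set Y} (hs : Dense s) (hf : Continuous f)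
    (hst : MapsTo f s t) : range f ⊆ closure t :=
  (hf.range_subset_closure_image_dense hs).trans (closure_mono hst.image_subset)

namespace Matrix

variable {m n A : Type*} [Fintype m] [Fintype n] [DecidableEq m] [DecidableEq n]

section Semiring

variable [Semiring A] [TopologicalSpace A]

theorem dense_setOf_isUnit_reindex (e : m ≃ n) (hm : Dense {M : Matrix m m A | IsUnit M}) :
    Dense {N : Matrix n n A | IsUnit N} :=
  hm.setOf_isUnit_of_denseRange (f := (reindexRingEquiv A e).toMonoidHom)
    (reindexRingEquiv A e).surjective.denseRange (continuous_id.matrix_reindex e e)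

theorem dense_setOf_isUnit_of_unique [Unique m] (h : Dense {a : A | IsUnit a}) :
    Dense {M : Matrix m m A | IsUnit M} := by
  have hsurj : Function.Surjective (scalar m : A →+* Matrix m m A) := fun M =>
    ⟨M default default, by ext i j; simp [Subsingleton.elim i default, Subsingleton.elim j default]⟩
  exact h.setOf_isUnit_of_denseRange (f := (scalar m : A →+* Matrix m m A).toMonoidHom)
    hsurj.denseRange (continuous_pi fun _ => continuous_id).matrix_diagonal

end Semiring

section Ring

variable [Ring A]

theorem isUnit_fromBlocks_zero₂₁_of_isUnit {a : Matrix m m A} {b : Matrix m n A}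
    {d : Matrix n n A} (ha : IsUnit a) (hd : IsUnit d) : IsUnit (fromBlocks a b 0 d) := by
  obtain ⟨a', haa', ha'a⟩ := isUnit_iff_exists.1 ha
  obtain ⟨d', hdd', hd'd⟩ := isUnit_iff_exists.1 hd
  refine isUnit_iff_exists.2 ⟨fromBlocks a' (-(a' * b * d')) 0 d', ?_, ?_⟩
  · simp [fromBlocks_multiply, ← Matrix.mul_assoc, haa', hdd']
  · simp [fromBlocks_multiply, Matrix.mul_assoc, ha'a, hd'd]

theorem isUnit_fromBlocks_zero₁₂_of_isUnit {a : Matrix m m A} {c : Matrix n m A}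
    {d : Matrix n n A} (ha : IsUnit a) (hd : IsUnit d) : IsUnit (fromBlocks a 0 c d) := by
  obtain ⟨a', haa', ha'a⟩ := isUnit_iff_exists.1 ha
  obtain ⟨d', hdd', hd'd⟩ := isUnit_iff_exists.1 hd
  refine isUnit_iff_exists.2 ⟨fromBlocks a' 0 (-(d' * c * a')) d', ?_, ?_⟩
  · simp [fromBlocks_multiply, ← Matrix.mul_assoc, haa', hdd']
  · simp [fromBlocks_multiply, Matrix.mul_assoc, ha'a, hd'd]

theorem fromBlocks_eq_mul_schur {a a' : Matrix m m A} (ha'a : a' * a = 1) (b : Matrix m n A)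
    (c : Matrix n m A) (d : Matrix n n A) :
    fromBlocks a b c d = fromBlocks 1 0 (c * a') 1 * fromBlocks a b 0 (d - c * a' * b) := by
  simp [fromBlocks_multiply, Matrix.mul_assoc, ha'a]

end Ring

variable [Ring A] [TopologicalSpace A] [IsTopologicalRing A]

theorem fromBlocks_mem_closure_setOf_isUnit (hn : Dense {N : Matrix n n A | IsUnit N})
    {a : Matrix m m A} (ha : IsUnit a) (b : Matrix m n A) (c : Matrix n m A) (d : Matrix n n A) :
    fromBlocks a b c d ∈ closure {M : Matrix (m ⊕ n) (m ⊕ n) A | IsUnit M} := by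
  obtain ⟨a', -, ha'a⟩ := isUnit_iff_exists.1 ha
  have hcont : Continuous fun d' : Matrix n n A =>
      fromBlocks 1 0 (c * a') 1 * fromBlocks a b 0 d' :=
    continuous_const.matrix_mul <|
      continuous_const.matrix_fromBlocks continuous_const continuous_const continuous_id
  have hmaps : MapsTo (fun d' : Matrix n n A => fromBlocks 1 0 (c * a') 1 * fromBlocks a b 0 d')
      {N | IsUnit N} {M | IsUnit M} := fun d' hd' =>
    (isUnit_fromBlocks_zero₁₂_of_isUnit isUnit_one isUnit_one).mul
      (isUnit_fromBlocks_zero₂₁_of_isUnit ha hd')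
  rw [fromBlocks_eq_mul_schur ha'a]
  exact hn.range_subset_closure_of_mapsTo hcont hmaps (mem_range_self _)

theorem dense_setOf_isUnit_sum (hm : Dense {M : Matrix m m A | IsUnit M})
    (hn : Dense {N : Matrix n n A | IsUnit N}) :
    Dense {M : Matrix (m ⊕ n) (m ⊕ n) A | IsUnit M} := by
  intro P
  have hcont : Continuous fun a : Matrix m m A =>
      fromBlocks a P.toBlocks₁₂ P.toBlocks₂₁ P.toBlocks₂₂ :=
    continuous_id.matrix_fromBlocks continuous_const continuous_const continuous_const
  have hmaps := fun a (ha : IsUnit a) => fromBlocks_mem_closure_setOf_isUnit hn ha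
    P.toBlocks₁₂ P.toBlocks₂₁ P.toBlocks₂₂
  rw [← closure_closure, ← fromBlocks_toBlocks P]
  exact hm.range_subset_closure_of_mapsTo hcont hmaps (mem_range_self _)

end Matrix

theorem matrix_dense_invertibles_general
    (A : Type*) [NormedRing A]
    (h : Dense {a : A | IsUnit a}) (n : ℕ) :
    Dense {M : Matrix (Fin n) (Fin n) A | IsUnit M} := by
  induction n with
  | zero => simp only [Subsingleton.elim _ (1 : Matrix (Fin 0) (Fin 0) A), isUnit_one,
      ofPred_true, dense_univ]
  | succ k ih =>
    exact dense_setOf_isUnit_reindex finSumFinEquiv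
      (dense_setOf_isUnit_sum ih (dense_setOf_isUnit_of_unique h))

/-- If a unital complex Banach algebra `A` has dense invertible group, then so does the
algebra of `n × n` matrices over `A` (with the topology of entrywise convergence). -/
theorem matrix_dense_invertibles
    (A : Type*) [NormedRing A] [NormedAlgebra ℂ A] [CompleteSpace A]
    (h : Dense {a : A | IsUnit a}) (n : ℕ) (hn : 0 < n) :
    Dense {M : Matrix (Fin n) (Fin n) A | IsUnit M} :=
  matrix_dense_invertibles_general A h n
end

section
/- Let A be a commutative unital complex Banach algebra and let a ∈ A. Suppose that the spectrum σ(a) of a has empty interior in ℂ, and that A is rationally generated by a, i.e., the set { p(a)·q(a)⁻¹ : p, q complex polynomials such that q has no zero on σ(a) } is dense in A (note q(a) is invertible since q does not vanish on σ(a)). Then the set of invertible elements of A is dense in A. -/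
/-! Since `σ(a)` has empty interior, every `a - r` is a limit of units `a - w` with `w ∉ σ(a)`.
Over `ℂ` a polynomial splits, so `p(a)` is a scalar times a product of such factors and lies in
the closure of the units, which is a closed submonoid; hence so does every `p(a) q(a)⁻¹`. -/

open Polynomial

section Closure

variable {𝕜 A : Type*} [NontriviallyNormedField 𝕜]

theorem algebraMap_mem_closure_units [NormedRing A] [NormedAlgebra 𝕜 A] (c : 𝕜) :
    algebraMap 𝕜 A c ∈ closure {x : A | IsUnit x} := by
  refine closure_mono ?_ <| (continuous_algebraMap 𝕜 A).range_subset_closure_image_dense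
    (dense_compl_singleton 0) ⟨c, rfl⟩
  rintro _ ⟨w, hw, rfl⟩
  exact (isUnit_iff_ne_zero.2 hw).map _

theorem sub_algebraMap_mem_closure_units [NormedRing A] [NormedAlgebra 𝕜 A] {a : A}
    (ha : Dense (spectrum 𝕜 a)ᶜ) (z : 𝕜) : a - algebraMap 𝕜 A z ∈ closure {x : A | IsUnit x} := by
  refine closure_mono ?_ <|
    (continuous_const.sub (continuous_algebraMap 𝕜 A)).range_subset_closure_image_dense ha ⟨z, rfl⟩
  rintro _ ⟨w, hw, rfl⟩
  exact IsUnit.sub_iff.1 (spectrum.notMem_iff.1 hw)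

theorem aeval_mem_topologicalClosure_units [IsAlgClosed 𝕜] [NormedCommRing A] [NormedAlgebra 𝕜 A]
    {a : A} (ha : Dense (spectrum 𝕜 a)ᶜ) (p : 𝕜[X]) :
    aeval a p ∈ (IsUnit.submonoid A).topologicalClosure := by
  rw [← C_leadingCoeff_mul_prod_multiset_X_sub_C (IsAlgClosed.card_roots_eq_natDegree (p := p))]
  simp only [map_mul, aeval_C, map_multiset_prod, Multiset.map_map, Function.comp_def, map_sub,
    aeval_X]
  refine mul_mem (algebraMap_mem_closure_units _) (multiset_prod_mem _ fun x hx ↦ ?_)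
  obtain ⟨r, -, rfl⟩ := Multiset.mem_map.1 hx
  exact sub_algebraMap_mem_closure_units ha r

end Closure

theorem isUnit_aeval_of_forall_mem_spectrum_eval_ne_zero {A : Type*} [NormedRing A]
    [NormedAlgebra ℂ A] [CompleteSpace A] {a : A} {q : ℂ[X]}
    (hq : ∀ z ∈ spectrum ℂ a, eval z q ≠ 0) : IsUnit (aeval a q) := by
  nontriviality A
  refine spectrum.isUnit_of_zero_notMem ℂ ?_
  rw [spectrum.map_polynomial_aeval]
  rintro ⟨z, hz, hqz⟩
  exact hq z hz hqz

/-- If a commutative unital complex Banach algebra `A` is rationally generated by an element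
`a` whose spectrum has empty interior, then the invertible elements of `A` are dense in `A`. -/
theorem dense_invertibles_of_rationally_generated
    (A : Type*) [NormedCommRing A] [NormedAlgebra ℂ A] [CompleteSpace A]
    (a : A) (hspec : interior (spectrum ℂ a) = ∅)
    (hgen : Dense {x : A | ∃ p q : Polynomial ℂ,
      (∀ z ∈ spectrum ℂ a, Polynomial.eval z q ≠ 0) ∧
      x = Polynomial.aeval a p * Ring.inverse (Polynomial.aeval a q)}) :
    Dense {x : A | IsUnit x} := by
  have hpoly := aeval_mem_topologicalClosure_units (interior_eq_empty_iff_dense_compl.1 hspec)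
  refine dense_closure.1 (hgen.mono ?_)
  rintro _ ⟨p, q, hq, rfl⟩
  have hqa : IsUnit (aeval a q) := isUnit_aeval_of_forall_mem_spectrum_eval_ne_zero hq
  exact mul_mem (hpoly p) (subset_closure (isUnit_ringInverse.2 hqa))
end

section
/- Let K be a compact subset of ℂ with empty interior, let U be an open neighbourhood of K, and let φ : U → ℂ be holomorphic. Then the image φ(K) has empty interior in ℂ. -/
/-!
Where `φ' ≠ 0`, `φ` is a local homeomorphism, so it maps a small compact piece of `K` onto a
compact set with empty interior. At a critical point `z`, either `φ` is constant near `z`, or the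
zeros of the analytic function `φ'` are isolated and `φ` is a local homeomorphism on a punctured
neighbourhood of `z`. Covering by countably many such neighbourhoods (Lindelöf) shows that `φ(K)`
is meagre, hence has empty interior by the Baire category theorem.
-/

open Set Filter Topology

theorem OpenPartialHomeomorph.interior_image_eq_empty {X Y : Type*} [TopologicalSpace X]
    [TopologicalSpace Y] (e : OpenPartialHomeomorph X Y) {s : Set X} (hs : s ⊆ e.source)
    (hs' : interior s = ∅) : interior (e '' s) = ∅ := by
  have hopen : IsOpen (e.symm '' interior (e '' s)) :=
    e.symm.isOpen_image_of_subset_source isOpen_interior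
      (interior_subset.trans (e.mapsTo.mono_left hs).image_subset)
  have hsub : e.symm '' interior (e '' s) ⊆ s := by
    rintro _ ⟨_, hy, rfl⟩
    obtain ⟨x, hx, rfl⟩ := interior_subset hy
    rwa [e.left_inv (hs hx)]
  rw [← image_eq_empty (f := e.symm), ← subset_empty_iff, ← hs']
  exact hopen.subset_interior_iff.mpr hsub

theorem OpenPartialHomeomorph.exists_mem_nhds_isNowhereDense_image {X Y : Type*}
    [TopologicalSpace X] [RegularSpace X] [TopologicalSpace Y] [T2Space Y]
    (e : OpenPartialHomeomorph X Y) {K : Set X} (hK : IsCompact K) (hK' : interior K = ∅)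
    {z : X} (hz : z ∈ e.source) : ∃ n ∈ 𝓝 z, IsNowhereDense (e '' (K ∩ n)) := by
  obtain ⟨n, hn, hn_closed, hn_sub⟩ := exists_mem_nhds_isClosed_subset (e.open_source.mem_nhds hz)
  have hsub : K ∩ n ⊆ e.source := inter_subset_right.trans hn_sub
  have hcompact : IsCompact (e '' (K ∩ n)) :=
    (hK.inter_right hn_closed).image_of_continuousOn (e.continuousOn.mono hsub)
  refine ⟨n, hn, hcompact.isClosed.isNowhereDense_iff.mpr ?_⟩
  exact e.interior_image_eq_empty hsub
    (subset_empty_iff.mp (hK' ▸ interior_mono inter_subset_left))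

theorem HasStrictFDerivAt.exists_mem_nhds_isNowhereDense_image {𝕜 E F : Type*}
    [NontriviallyNormedField 𝕜] [NormedAddCommGroup E] [NormedSpace 𝕜 E] [CompleteSpace E]
    [NormedAddCommGroup F] [NormedSpace 𝕜 F] {f : E → F} {f' : E ≃L[𝕜] F} {z : E}
    (hf : HasStrictFDerivAt f (f' : E →L[𝕜] F) z) {K : Set E} (hK : IsCompact K)
    (hK' : interior K = ∅) : ∃ n ∈ 𝓝 z, IsNowhereDense (f '' (K ∩ n)) := by
  simpa using (hf.toOpenPartialHomeomorph f).exists_mem_nhds_isNowhereDense_image hK hK'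
    hf.mem_toOpenPartialHomeomorph_source

theorem isMeagre_image_of_forall_exists_nhds {X Y : Type*} [TopologicalSpace X]
    [SecondCountableTopology X] [TopologicalSpace Y] {f : X → Y} {s : Set X}
    (h : ∀ x ∈ s, ∃ n ∈ 𝓝 x, IsMeagre (f '' (s ∩ n))) : IsMeagre (f '' s) := by
  choose! n hn hmeagre using h
  obtain ⟨t, hts, htc, hcover⟩ :=
    TopologicalSpace.countable_cover_nhdsWithin fun x hx => mem_nhdsWithin_of_mem_nhds (hn x hx)
  have : f '' s ⊆ ⋃ x ∈ t, f '' (s ∩ n x) := by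
    rintro _ ⟨y, hy, rfl⟩
    obtain ⟨x, hx, hyx⟩ := mem_iUnion₂.mp (hcover hy)
    exact mem_iUnion₂.mpr ⟨x, hx, y, ⟨hy, hyx⟩, rfl⟩
  exact (isMeagre_biUnion htc fun x hx => hmeagre x (hts hx)).mono this

theorem AnalyticAt.eventually_eq_or_eventually_deriv_ne_zero {𝕜 E : Type*} [RCLike 𝕜]
    [NormedAddCommGroup E] [NormedSpace 𝕜 E] [CompleteSpace E] {f : 𝕜 → E} {z : 𝕜}
    (hf : AnalyticAt 𝕜 f z) : (∀ᶠ w in 𝓝 z, f w = f z) ∨ ∀ᶠ w in 𝓝[≠] z, deriv f w ≠ 0 := by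
  refine hf.deriv.eventually_eq_zero_or_eventually_ne_zero.imp_left fun hderiv => ?_
  obtain ⟨r, hr, hball⟩ := Metric.eventually_nhds_iff_ball.mp (hderiv.and hf.eventually_analyticAt)
  filter_upwards [Metric.ball_mem_nhds z hr] with w hw
  exact Metric.isOpen_ball.is_const_of_deriv_eq_zero (convex_ball z r).isPreconnected
    (fun x hx => (hball x hx).2.differentiableAt.differentiableWithinAt)
    (fun x hx => (hball x hx).1) hw (Metric.mem_ball_self hr)

theorem AnalyticAt.exists_mem_nhds_isMeagre_image_inter {𝕜 : Type*} [RCLike 𝕜] {f : 𝕜 → 𝕜}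
    {z : 𝕜} (hf : AnalyticAt 𝕜 f z) {K : Set 𝕜} (hK : IsCompact K) (hK' : interior K = ∅) :
    ∃ n ∈ 𝓝 z, IsMeagre (f '' (K ∩ n)) := by
  have hpoint : IsMeagre {f z} := IsNowhereDense.isMeagre <| by
    rw [IsNowhereDense, closure_singleton, interior_singleton]
  rcases hf.eventually_eq_or_eventually_deriv_ne_zero with hconst | hderiv
  · exact ⟨_, hconst, hpoint.mono (image_subset_iff.mpr fun _ hw => mem_singleton_iff.mpr hw.2)⟩
  obtain ⟨n, hn, hregular⟩ :=
    ((eventually_nhdsWithin_iff.mp hderiv).and hf.eventually_analyticAt).exists_mem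
  refine ⟨n, hn, ?_⟩
  have hpunctured : IsMeagre (f '' ((K ∩ n) \ {z})) := by
    refine isMeagre_image_of_forall_exists_nhds fun w ⟨⟨_, hwn⟩, hwz⟩ => ?_
    obtain ⟨hw_deriv, hw_analytic⟩ := hregular w hwn
    obtain ⟨m, hm, hnowhere⟩ := (hw_analytic.hasStrictDerivAt.hasStrictFDerivAt_equiv
      (hw_deriv hwz)).exists_mem_nhds_isNowhereDense_image hK hK'
    refine ⟨m, hm, hnowhere.isMeagre.mono (image_mono ?_)⟩
    exact inter_subset_inter_left _ (sdiff_subset.trans inter_subset_left)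
  refine (hpunctured.union hpoint).mono ?_
  calc f '' (K ∩ n) ⊆ f '' ((K ∩ n) \ {z} ∪ {z}) := image_mono (subset_sdiff_union _ _)
    _ = f '' ((K ∩ n) \ {z}) ∪ {f z} := by rw [image_union, image_singleton]

/-- If `K` is a compact subset of `ℂ` with empty interior and `φ` is holomorphic on an open
neighbourhood `U` of `K`, then `φ(K)` has empty interior. -/
theorem holomorphic_image_of_compact_empty_interior
    (K U : Set ℂ) (hK : IsCompact K) (hKint : interior K = ∅)
    (hU : IsOpen U) (hKU : K ⊆ U)
    (φ : ℂ → ℂ) (hφ : DifferentiableOn ℂ φ U) :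
    interior (φ '' K) = ∅ := by
  have hanalytic : AnalyticOnNhd ℂ φ U := hφ.analyticOnNhd hU
  have hmeagre : IsMeagre (φ '' K) := isMeagre_image_of_forall_exists_nhds fun z hz =>
    (hanalytic z (hKU hz)).exists_mem_nhds_isMeagre_image_inter hK hKint
  exact interior_eq_empty_iff_dense_compl.mpr (dense_of_mem_residual hmeagre)
end

section
/- Let A be a commutative unital complex Banach algebra whose set of invertible elements is dense in A. Let α be a monic polynomial over A of degree n ≥ 1, and let A_α = A[x]/(α(x)) be the quotient of the polynomial ring A[x] by the principal ideal generated by α (the Arens–Hoffman extension of A by α). Then for every polynomial β ∈ A[x] and every ε > 0 there exists c ∈ A with ‖c‖ < ε such that the image of β + c (the polynomial β with its constant coefficient perturbed by c) in A_α is invertible in A_α. In particular, since the Arens–Hoffman norm of an element of A_α is a weighted sum of the norms of the coefficients of its unique representative of degree less than n, the invertible group of A_α is dense in A_α. -/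
/-!
The image of `β + c` in `A_α` is invertible iff its norm over `A` is, and that norm is `q(c)`
for the monic characteristic polynomial `q` of multiplication by `-β`. So it suffices that for a
polynomial `q` with invertible leading coefficient, `q(c)` is invertible for a dense set of `c`.
This goes by induction on the degree: `q'` again has invertible leading coefficient (as `A` is a
`ℚ`-algebra), so `q'(c₀)` is invertible for some `c₀` in any given open set `U`; by the inverse
function theorem `q(U)` is then a neighbourhood of `q(c₀)`, hence contains an invertible element.
-/

open Polynomial Topology

namespace Polynomial

lemma isUnit_leadingCoeff_derivative {R : Type*} [CommSemiring R] {p : R[X]} {n : ℕ}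
    (hdeg : p.natDegree = n + 1) (hp : IsUnit p.leadingCoeff) (hn : IsUnit ((n + 1 : ℕ) : R)) :
    IsUnit (derivative p).leadingCoeff := by
  have hcoeff : (derivative p).coeff n = p.leadingCoeff * (n + 1 : ℕ) := by
    rw [coeff_derivative, leadingCoeff, hdeg]
    push_cast
    rfl
  have hunit : IsUnit ((derivative p).coeff n) := hcoeff ▸ hp.mul hn
  nontriviality R
  have hle : (derivative p).natDegree ≤ n := by
    have := natDegree_derivative_le p
    omega
  rwa [leadingCoeff, natDegree_eq_of_le_of_coeff_ne_zero hle hunit.ne_zero]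

section NormedAlgebra

variable {A : Type*} [NormedCommRing A]

theorem hasStrictFDerivAt_eval {𝕜 : Type*} [NontriviallyNormedField 𝕜] [NormedAlgebra 𝕜 A]
    (p : A[X]) (c : A) :
    HasStrictFDerivAt (fun y ↦ p.eval y)
      (ContinuousLinearMap.mul 𝕜 A ((derivative p).eval c)) c := by
  induction p using Polynomial.induction_on' with
  | add p q hp hq =>
    rw [derivative_add, eval_add, map_add]
    simpa only [eval_add] using hp.fun_add hq
  | monomial n a =>
    simp only [eval_monomial, derivative_monomial]
    refine ((hasStrictFDerivAt_pow n).const_mul a).congr_fderiv ?_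
    ext
    simp [mul_assoc]

variable [CompleteSpace A]

theorem image_eval_mem_nhds (𝕜 : Type*) [NontriviallyNormedField 𝕜] [NormedAlgebra 𝕜 A]
    {p : A[X]} {c : A} (hc : IsUnit ((derivative p).eval c)) {s : Set A} (hs : s ∈ 𝓝 c) :
    (fun y ↦ p.eval y) '' s ∈ 𝓝 (p.eval c) := by
  obtain ⟨u, hu⟩ := hc
  have hsurj : (ContinuousLinearMap.mul 𝕜 A ((derivative p).eval c)).range = ⊤ :=
    LinearMap.range_eq_top.mpr fun y ↦ ⟨(↑u⁻¹ : A) * y, by simp [← hu, ← mul_assoc]⟩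
  rw [← (hasStrictFDerivAt_eval p c).map_nhds_eq_of_surj hsurj]
  exact Filter.image_mem_map hs

theorem dense_setOf_isUnit_eval (𝕜 : Type*) [NontriviallyNormedField 𝕜] [CharZero 𝕜]
    [NormedAlgebra 𝕜 A] (hA : Dense {a : A | IsUnit a}) {p : A[X]}
    (hp : IsUnit p.leadingCoeff) : Dense {c | IsUnit (p.eval c)} := by
  induction hdeg : p.natDegree using Nat.strong_induction_on generalizing p with
  | _ n ih =>
    rcases n with _ | n
    · have hC : p = C p.leadingCoeff := by
        rw [leadingCoeff, hdeg]
        exact eq_C_of_natDegree_eq_zero hdeg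
      rw [hC]
      simpa only [eval_C, hp, Set.ofPred_true] using dense_univ
    · have hn : IsUnit ((n + 1 : ℕ) : A) := by
        rw [← map_natCast (algebraMap 𝕜 A)]
        exact (isUnit_iff_ne_zero.mpr (Nat.cast_ne_zero.mpr n.succ_ne_zero)).map _
      have hderiv : Dense {c | IsUnit ((derivative p).eval c)} :=
        ih _ (hdeg ▸ natDegree_derivative_lt (by omega))
          (isUnit_leadingCoeff_derivative hdeg hp hn) rfl
      refine dense_iff_inter_open.mpr fun U hU hUne ↦ ?_
      obtain ⟨c₀, hc₀U, hc₀⟩ := hderiv.inter_open_nonempty U hU hUne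
      obtain ⟨V, hVsub, hV, hc₀V⟩ :=
        mem_nhds_iff.mp (image_eval_mem_nhds 𝕜 hc₀ (hU.mem_nhds hc₀U))
      obtain ⟨_, ⟨c, hcU, rfl⟩, hunit⟩ := (hA.inter_open_nonempty V hV ⟨_, hc₀V⟩).mono
        (Set.inter_subset_inter_left _ hVsub)
      exact ⟨c, hcU, hunit⟩

end NormedAlgebra

end Polynomial

theorem Algebra.isUnit_eval_charpoly_lmul_neg_iff {R S : Type*} [CommRing R] [CommRing S]
    [Algebra R S] [Module.Free R S] [Module.Finite R S] (x : S) (c : R) :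
    IsUnit ((Algebra.lmul R S (-x)).charpoly.eval c) ↔ IsUnit (x + algebraMap R S c) := by
  rw [LinearMap.eval_charpoly, ← (Algebra.lmul R S).commutes, ← map_sub, sub_neg_eq_add, add_comm,
    ← LinearMap.isUnit_iff_isUnit_det, Algebra.lmul_isUnit_iff]

theorem arensHoffman_perturb_constant_coeff_invertible_general
    (A : Type*) [NormedCommRing A] [NormedAlgebra ℂ A] [CompleteSpace A]
    (hA : Dense {a : A | IsUnit a})
    (α : Polynomial A) (hmonic : α.Monic) :
    ∀ (β : Polynomial A) (ε : ℝ), 0 < ε →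
      ∃ c : A, ‖c‖ < ε ∧ IsUnit (AdjoinRoot.mk α (β + Polynomial.C c)) := by
  intro β ε hε
  have := hmonic.free_adjoinRoot
  have := hmonic.finite_adjoinRoot
  set q := (Algebra.lmul A (AdjoinRoot α) (-AdjoinRoot.mk α β)).charpoly
  have hq : IsUnit q.leadingCoeff := by
    rw [(LinearMap.charpoly_monic _).leadingCoeff]
    exact isUnit_one
  obtain ⟨c, hunit, hc⟩ := (dense_setOf_isUnit_eval ℂ hA hq).exists_mem_open Metric.isOpen_ball
    ⟨0, Metric.mem_ball_self hε⟩
  refine ⟨c, mem_ball_zero_iff.mp hc, ?_⟩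
  rwa [map_add, AdjoinRoot.mk_C, ← AdjoinRoot.algebraMap_eq,
    ← Algebra.isUnit_eval_charpoly_lmul_neg_iff]

/-- **Main theorem (Theorem 2.1).** Let `A` be a commutative unital complex Banach algebra
with dense invertible group and `α` a monic polynomial over `A` of degree `n ≥ 1`.  Then for
every polynomial `β ∈ A[x]` and every `ε > 0` one can perturb the constant coefficient of `β`
by an element `c` of norm less than `ε` so that the image of `β + c` in the Arens–Hoffman
extension `A_α = A[x]/(α)` is invertible.  (Since the Arens–Hoffman norm is a weighted sum of
the norms of the coefficients, this shows `G(A_α)` is dense in `A_α`.) -/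
theorem arensHoffman_perturb_constant_coeff_invertible
    (A : Type*) [NormedCommRing A] [NormedAlgebra ℂ A] [CompleteSpace A]
    (hA : Dense {a : A | IsUnit a})
    (α : Polynomial A) (hmonic : α.Monic) (hdeg : 1 ≤ α.natDegree) :
    ∀ (β : Polynomial A) (ε : ℝ), 0 < ε →
      ∃ c : A, ‖c‖ < ε ∧ IsUnit (AdjoinRoot.mk α (β + Polynomial.C c)) :=
  arensHoffman_perturb_constant_coeff_invertible_general A hA α hmonic
end

section
/- Let A be a commutative unital complex Banach algebra whose set of invertible elements is dense in A, and let P be a monic polynomial with coefficients in A. Then the set { c ∈ A : P(c) is invertible in A } is dense in A, where P(c) denotes the evaluation of P at c. -/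
/-!
Induct on the degree. The derivative of a polynomial of degree `n + 1` with unit top coefficient
again has a unit coefficient in degree `n`, since `n + 1` is invertible in a complex algebra, so by
induction `P'(c)` is invertible for a dense set of `c`. At each such `c` the inverse function
theorem makes `x ↦ P(x)` open at `c`, so small balls around `c` are mapped onto neighbourhoods of
`P(c)`, which meet the dense group of invertibles.
-/

open Polynomial Filter Topology

theorem Dense.preimage_of_nhds_le_map {X Y : Type*} [TopologicalSpace X] [TopologicalSpace Y]
    {f : X → Y} {s : Set Y} {D : Set X} (hs : Dense s) (hD : Dense D)
    (hf : ∀ x ∈ D, 𝓝 (f x) ≤ Filter.map f (𝓝 x)) : Dense (f ⁻¹' s) := by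
  refine dense_iff_inter_open.mpr fun U hU hne => ?_
  obtain ⟨c, hcU, hcD⟩ := hD.inter_open_nonempty U hU hne
  have himage : f '' U ∈ 𝓝 (f c) := hf c hcD (image_mem_map (hU.mem_nhds hcU))
  obtain ⟨_, ⟨x, hxU, rfl⟩, hxs⟩ := mem_closure_iff_nhds.mp (hs (f c)) _ himage
  exact ⟨x, hxU, hxs⟩

namespace Polynomial

variable {A : Type*} [NormedCommRing A]

theorem hasStrictFDerivAt_eval_s8 (𝕜 : Type*) [NontriviallyNormedField 𝕜] [NormedAlgebra 𝕜 A]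
    (P : A[X]) (c : A) :
    HasStrictFDerivAt (fun x => P.eval x) (P.derivative.eval c • ContinuousLinearMap.id 𝕜 A) c := by
  induction P using Polynomial.induction_on' with
  | add P Q hP hQ =>
    simp only [eval_add, derivative_add]
    refine (hP.fun_add hQ).congr_fderiv ?_
    ext
    simp [add_mul]
  | monomial n a =>
    simp only [eval_monomial]
    refine ((hasStrictFDerivAt_pow n).const_mul a).congr_fderiv ?_
    ext
    simp [derivative_monomial, mul_assoc]

theorem map_eval_nhds_eq (𝕜 : Type*) [NontriviallyNormedField 𝕜] [NormedAlgebra 𝕜 A]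
    [CompleteSpace A] {P : A[X]} {c : A} (hc : IsUnit (P.derivative.eval c)) :
    Filter.map (fun x => P.eval x) (𝓝 c) = 𝓝 (P.eval c) := by
  refine (P.hasStrictFDerivAt_eval_s8 𝕜 c).map_nhds_eq_of_surj ?_
  refine LinearMap.range_eq_top.mpr fun y => ⟨hc.unit⁻¹ * y, ?_⟩
  simp [← mul_assoc]

theorem dense_setOf_isUnit_eval_s8 (𝕜 : Type*) [NontriviallyNormedField 𝕜] [CharZero 𝕜]
    [NormedAlgebra 𝕜 A] [CompleteSpace A] (hA : Dense {a : A | IsUnit a}) (n : ℕ) :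
    ∀ P : A[X], P.natDegree ≤ n → IsUnit (P.coeff n) → Dense {c | IsUnit (P.eval c)} := by
  induction n with
  | zero =>
    intro P hdeg hunit
    rw [eq_C_of_natDegree_le_zero hdeg]
    simp [hunit]
  | succ n ih =>
    intro P hdeg hunit
    have hn : IsUnit ((n : A) + 1) := by
      simpa using (isUnit_iff_ne_zero.mpr (Nat.cast_add_one_ne_zero (R := 𝕜) n)).map
        (algebraMap 𝕜 A)
    have hderiv : Dense {c | IsUnit (P.derivative.eval c)} := by
      refine ih P.derivative ((natDegree_derivative_le P).trans (by omega)) ?_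
      rw [coeff_derivative]
      exact hunit.mul hn
    exact hA.preimage_of_nhds_le_map hderiv fun c hc => (map_eval_nhds_eq 𝕜 hc).ge

end Polynomial

/-- If a commutative unital complex Banach algebra `A` has dense invertible group and `P` is
a monic polynomial over `A`, then the set of `c ∈ A` for which `P(c)` is invertible is dense
in `A`. -/
theorem dense_invertible_evaluations_of_monic
    (A : Type*) [NormedCommRing A] [NormedAlgebra ℂ A] [CompleteSpace A]
    (hA : Dense {a : A | IsUnit a})
    (P : Polynomial A) (hP : P.Monic) :
    Dense {c : A | IsUnit (P.eval c)} :=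
  dense_setOf_isUnit_eval_s8 ℂ hA P.natDegree P le_rfl (hP.coeff_natDegree ▸ isUnit_one)
end

section
/- Let A be a commutative unital complex Banach algebra, let α be a monic polynomial over A of degree n ≥ 1, and let A_α = A[x]/(α(x)). Suppose that A_α has dense invertible group, in the following sense: for every polynomial β ∈ A[x] of degree less than n and every ε > 0 there exists a polynomial β̃ ∈ A[x] of degree less than n, whose coefficients each differ in norm from the corresponding coefficients of β by less than ε, such that the image of β̃ in A_α is invertible in A_α. Then every n-th power aⁿ (a ∈ A) lies in the closure of the set of invertible elements of A; that is, { aⁿ : a ∈ A } ⊆ cl G(A). -/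
/-!
The norm `N : A_α → A` sends units to units, takes the value `aⁿ` at the constant `a`, and,
in the coordinates of the basis `1, x, …, xⁿ⁻¹`, is the determinant of a matrix depending
linearly on those coordinates, hence continuous. Density of `G(A_α)` provides units `γ` with
coordinates tending to those of `a`, so the units `N γ` tend to `aⁿ`.
-/

open Polynomial

theorem continuous_algebraNorm_comp_linearMap {A S ι κ : Type*} [CommRing A] [TopologicalSpace A]
    [IsTopologicalRing A] [Ring S] [Algebra A S] [Finite ι] [Fintype κ] (b : Module.Basis κ A S)
    (Φ : (ι → A) →ₗ[A] S) :
    Continuous fun v => Algebra.norm A (Φ v) := by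
  classical
  simp_rw [Algebra.norm_eq_matrix_det b]
  exact ((Algebra.leftMulMatrix b).toLinearMap.comp Φ).continuous_on_pi.matrix_det

namespace AdjoinRoot

section CommRing

variable {A : Type*} [CommRing A] {α : A[X]} {n : ℕ}

noncomputable def ofCoeffs (α : A[X]) (n : ℕ) : (Fin n → A) →ₗ[A] AdjoinRoot α :=
  Fintype.linearCombination A fun i : Fin n => root α ^ (i : ℕ)

theorem ofCoeffs_coeff {p : A[X]} (hp : p.degree < n) :
    ofCoeffs α n (fun i => p.coeff i) = mk α p := by
  rw [ofCoeffs, Fintype.linearCombination_apply,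
    sum_fin (fun i c => c • root α ^ i) (fun _ => zero_smul A _) hp, ← aeval_eq, aeval_def,
    eval₂_eq_sum]
  simp only [Algebra.smul_def]

end CommRing

theorem coeffs_mem_closure_isUnit_ofCoeffs {A : Type*} [NormedCommRing A] {α : A[X]} {n : ℕ}
    (h : ∀ β : A[X], β.degree < n → ∀ ε : ℝ, 0 < ε → ∃ γ : A[X], γ.degree < n ∧
      (∀ j, ‖γ.coeff j - β.coeff j‖ < ε) ∧ IsUnit (mk α γ))
    {β : A[X]} (hβ : β.degree < n) :
    (fun i : Fin n => β.coeff i) ∈ closure {v | IsUnit (ofCoeffs α n v)} := by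
  refine Metric.mem_closure_iff.2 fun ε hε => ?_
  obtain ⟨γ, hγ, hclose, hunit⟩ := h β hβ ε hε
  refine ⟨fun i => γ.coeff i, by rwa [Set.mem_ofPred_eq, ofCoeffs_coeff hγ], ?_⟩
  exact (dist_pi_lt_iff hε).2 fun i => by simpa [dist_eq_norm, norm_sub_rev] using hclose i

end AdjoinRoot

theorem nth_powers_mem_closure_invertibles_of_arensHoffman_dense_general
    (A : Type*) [NormedCommRing A]
    (α : Polynomial A) (hmonic : α.Monic) (hdeg : 1 ≤ α.natDegree)
    (h : ∀ β : Polynomial A, β.degree < (α.natDegree : WithBot ℕ) → ∀ ε : ℝ, 0 < ε →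
      ∃ γ : Polynomial A, γ.degree < (α.natDegree : WithBot ℕ) ∧
        (∀ j, ‖γ.coeff j - β.coeff j‖ < ε) ∧ IsUnit (AdjoinRoot.mk α γ)) :
    ∀ a : A, a ^ α.natDegree ∈ closure {x : A | IsUnit x} := by
  intro a
  have hCa : (C a).degree < α.natDegree :=
    degree_C_le.trans_lt (WithBot.coe_pos.2 hdeg)
  let b := (AdjoinRoot.powerBasis' hmonic).basis
  have hnorm : Algebra.norm A (AdjoinRoot.mk α (C a)) = a ^ α.natDegree := by
    rw [AdjoinRoot.mk_C, ← AdjoinRoot.algebraMap_eq, Algebra.norm_algebraMap_of_basis b,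
      Fintype.card_fin, AdjoinRoot.powerBasis'_dim]
  rw [← hnorm, ← AdjoinRoot.ofCoeffs_coeff hCa]
  exact map_mem_closure (f := fun v => Algebra.norm A (AdjoinRoot.ofCoeffs α _ v))
    (continuous_algebraNorm_comp_linearMap b (AdjoinRoot.ofCoeffs α _))
    (AdjoinRoot.coeffs_mem_closure_isUnit_ofCoeffs h hCa) fun _ hv => hv.map _

/-- **Proposition 2.4.** Let `A` be a commutative unital complex Banach algebra and `α` a
monic polynomial over `A` of degree `n ≥ 1`.  If the Arens–Hoffman extension
`A_α = A[x]/(α)` has dense invertible group (expressed via coefficientwise approximation of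
representatives of degree less than `n`), then every `n`-th power in `A` lies in the closure
of the invertible group of `A`. -/
theorem nth_powers_mem_closure_invertibles_of_arensHoffman_dense
    (A : Type*) [NormedCommRing A] [NormedAlgebra ℂ A] [CompleteSpace A]
    (α : Polynomial A) (hmonic : α.Monic) (hdeg : 1 ≤ α.natDegree)
    (h : ∀ β : Polynomial A, β.degree < (α.natDegree : WithBot ℕ) → ∀ ε : ℝ, 0 < ε →
      ∃ γ : Polynomial A, γ.degree < (α.natDegree : WithBot ℕ) ∧
        (∀ j, ‖γ.coeff j - β.coeff j‖ < ε) ∧ IsUnit (AdjoinRoot.mk α γ)) :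
    ∀ a : A, a ^ α.natDegree ∈ closure {x : A | IsUnit x} :=
  nth_powers_mem_closure_invertibles_of_arensHoffman_dense_general A α hmonic hdeg h
end

section
/- The set of invertible elements of C([0,1]), the Banach algebra of continuous complex-valued functions on the unit interval with the supremum norm, is dense in C([0,1]); that is, the nowhere-vanishing continuous functions [0,1] → ℂ are uniformly dense among all continuous functions [0,1] → ℂ. -/
open Polynomial

/-- Key perturbation lemma: any pair of real polynomials can be perturbed by arbitrarily
small constants so that they have no common zero. -/
lemma exists_small_shift_no_common_zero (p q : ℝ[X]) {ε : ℝ} (hε : 0 < ε) :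
    ∃ a b : ℝ, |a| < ε ∧ |b| < ε ∧ ∀ x : ℝ, p.eval x + a ≠ 0 ∨ q.eval x + b ≠ 0 := by
  by_cases hp : ∃ c : ℝ, p = C c
  · obtain ⟨c, rfl⟩ := hp
    by_cases hc : c = 0
    · refine ⟨ε / 2, 0, ?_, by simpa using hε, fun x => Or.inl ?_⟩
      · rw [abs_of_pos (by linarith)]; linarith
      · simp [hc]; linarith
    · exact ⟨0, 0, by simpa using hε, by simpa using hε, fun x => Or.inl (by simp [hc])⟩
  · -- p is nonconstant, so p has finitely many roots
    have hp0 : p ≠ 0 := fun h => hp ⟨0, by simp [h]⟩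
    have hfin : Set.Finite {x : ℝ | p.IsRoot x} := Polynomial.finite_setOf_isRoot hp0
    -- the set of bad values of b is finite
    have hbad : Set.Finite ((fun x => -q.eval x) '' {x : ℝ | p.IsRoot x}) := hfin.image _
    have : ¬ (Set.Ioo (0:ℝ) ε ⊆ ((fun x => -q.eval x) '' {x : ℝ | p.IsRoot x})) := by
      intro hsub
      exact (Set.Infinite.mono hsub (Set.Ioo_infinite hε)) hbad
    obtain ⟨b, hbmem, hbnot⟩ := Set.not_subset.mp this
    refine ⟨0, b, by simpa using hε, ?_, fun x => ?_⟩
    · rw [abs_of_pos hbmem.1]; exact hbmem.2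
    · by_cases hx : p.eval x = 0
      · refine Or.inr ?_
        intro h
        exact hbnot ⟨x, hx, by dsimp only; linarith⟩
      · exact Or.inl (by simpa using hx)

/-- The invertible elements of `C([0,1], ℂ)` are dense: nowhere-vanishing continuous
complex-valued functions on the unit interval are uniformly dense. -/
theorem dense_invertibles_continuousMap_unitInterval :
    Dense {f : C(unitInterval, ℂ) | IsUnit f} := by
  rw [Metric.dense_iff]
  intro f ε hε
  -- real and imaginary parts of f
  let fr : C(Set.Icc (0:ℝ) 1, ℝ) := ⟨fun x => (f x).re, by fun_prop⟩
  let fi : C(Set.Icc (0:ℝ) 1, ℝ) := ⟨fun x => (f x).im, by fun_prop⟩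
  obtain ⟨p, hp⟩ := exists_polynomial_near_continuousMap 0 1 fr (ε / 5) (by linarith)
  obtain ⟨q, hq⟩ := exists_polynomial_near_continuousMap 0 1 fi (ε / 5) (by linarith)
  obtain ⟨a, b, ha, hb, hab⟩ := exists_small_shift_no_common_zero p q (show (0:ℝ) < ε / 5 by linarith)
  -- the approximating function
  let g : C(unitInterval, ℂ) := ⟨fun x => ((p.eval (x : ℝ) + a : ℝ) : ℂ) +
    ((q.eval (x : ℝ) + b : ℝ) : ℂ) * Complex.I, by fun_prop⟩
  have hg : IsUnit g := by
    rw [ContinuousMap.isUnit_iff_forall_ne_zero]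
    intro x h
    have hre : p.eval (x : ℝ) + a = 0 := by simpa [g] using congrArg Complex.re h
    have him : q.eval (x : ℝ) + b = 0 := by simpa [g] using congrArg Complex.im h
    rcases hab (x : ℝ) with h1 | h1
    · exact h1 hre
    · exact h1 him
  refine ⟨g, Metric.mem_ball.mpr ?_, hg⟩
  rw [ContinuousMap.dist_lt_iff (by linarith)]
  intro x
  have hpx : |p.eval (x : ℝ) - (f x).re| < ε / 5 := by
    have := ((p.toContinuousMapOn (Set.Icc 0 1) - fr).norm_coe_le_norm x).trans_lt hp
    simpa [fr, Real.norm_eq_abs] using this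
  have hqx : |q.eval (x : ℝ) - (f x).im| < ε / 5 := by
    have := ((q.toContinuousMapOn (Set.Icc 0 1) - fi).norm_coe_le_norm x).trans_lt hq
    simpa [fi, Real.norm_eq_abs] using this
  have key : dist (g x) (f x) ≤ |(g x).re - (f x).re| + |(g x).im - (f x).im| := by
    rw [Complex.dist_eq]
    exact (Complex.norm_le_abs_re_add_abs_im _).trans (by simp)
  have hre : |(g x).re - (f x).re| ≤ |p.eval (x : ℝ) - (f x).re| + |a| := by
    have : (g x).re - (f x).re = (p.eval (x : ℝ) - (f x).re) + a := by
      simp [g]; ring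
    rw [this]; exact abs_add_le _ _
  have him : |(g x).im - (f x).im| ≤ |q.eval (x : ℝ) - (f x).im| + |b| := by
    have : (g x).im - (f x).im = (q.eval (x : ℝ) - (f x).im) + b := by
      simp [g]; ring
    rw [this]; exact abs_add_le _ _
  calc dist (g x) (f x) ≤ |(g x).re - (f x).re| + |(g x).im - (f x).im| := key
    _ ≤ (|p.eval (x : ℝ) - (f x).re| + |a|) + (|q.eval (x : ℝ) - (f x).im| + |b|) := by
        gcongr
    _ < (ε/5 + ε/5) + (ε/5 + ε/5) := by gcongr
    _ < ε := by linarith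
end

section
/- The set of invertible elements of C([0,1]×[0,1]), the Banach algebra of continuous complex-valued functions on the unit square with the supremum norm, is not dense in C([0,1]×[0,1]); that is, there exists a continuous function f : [0,1]×[0,1] → ℂ and ε > 0 such that every continuous g : [0,1]×[0,1] → ℂ with sup-distance less than ε from f has a zero. -/
/-!
A nowhere-vanishing continuous function on the square has a continuous logarithm, since the square
is simply connected and `exp : ℂ → ℂ \ {0}` is a covering map. If `g` is uniformly within `1` of
`f(x, y) = (2x - 1) + (2y - 1)i`, then on the circle inscribed in the square `g / f` takes values
in the disc of radius `1` around `1`, where the principal logarithm is continuous. Hence a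
logarithm of `g` yields a continuous logarithm of `z ↦ z` on the unit circle, which does not exist.
-/

open Complex

namespace ContinuousMap

variable {X Y : Type*} [TopologicalSpace X] [TopologicalSpace Y]

def HasLog (f : C(X, ℂ)) : Prop :=
  ∃ L : C(X, ℂ), ∀ x, exp (L x) = f x

theorem HasLog.comp {f : C(X, ℂ)} (hf : f.HasLog) (φ : C(Y, X)) : (f.comp φ).HasLog := by
  obtain ⟨L, hL⟩ := hf
  exact ⟨L.comp φ, fun y => hL (φ y)⟩

theorem hasLog_of_forall_ne_zero [SimplyConnectedSpace X] [LocallyPathConnectedSpace X]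
    (f : C(X, ℂ)) (hf : ∀ x, f x ≠ 0) : f.HasLog := by
  obtain ⟨x₀⟩ := (inferInstance : Nonempty X)
  obtain ⟨L, ⟨-, hL⟩, -⟩ := isCoveringMapOn_exp.existsUnique_continuousMap_lifts f
    (exp_log (hf x₀)) hf
  exact ⟨L, congrFun hL⟩

theorem HasLog.of_norm_sub_lt {f g : C(X, ℂ)} (hg : g.HasLog)
    (hfg : ∀ x, ‖g x - f x‖ < ‖f x‖) : f.HasLog := by
  obtain ⟨G, hG⟩ := hg
  have hf : ∀ x, f x ≠ 0 := fun x h => (norm_nonneg (g x)).not_gt (by simpa [h] using hfg x)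
  have hslit : ∀ x, g x / f x ∈ slitPlane := fun x => by
    apply ball_one_subset_slitPlane
    rw [Metric.mem_ball, dist_eq_norm, div_sub_one (hf x), norm_div]
    exact (div_lt_one (norm_pos_iff.2 (hf x))).2 (hfg x)
  refine ⟨⟨fun x => G x - log (g x / f x),
    G.continuous.sub ((g.continuous.div f.continuous hf).clog hslit)⟩, fun x => ?_⟩
  have hg0 : g x ≠ 0 := by rw [← hG]; exact exp_ne_zero _
  simp only [coe_mk, exp_sub, hG, exp_log (div_ne_zero hg0 (hf x))]
  field_simp

end ContinuousMap

theorem Circle.not_hasLog_coe : ¬ (⟨(↑), continuous_subtype_val⟩ : C(Circle, ℂ)).HasLog := by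
  rintro ⟨L, hL⟩
  replace hL : ∀ z : Circle, Complex.exp (L z) = z := hL
  -- `h` is continuous with values in the discrete group `2πiℤ`, so it cannot drop by `2πi`
  set h : ℝ → ℂ := fun t => L (Circle.exp t) - t * I
  have hmaps : Set.MapsTo h Set.univ (AddSubgroup.zmultiples (2 * Real.pi * I)) := by
    intro t _
    obtain ⟨n, hn⟩ := Complex.exp_eq_one_iff.1 (show Complex.exp (h t) = 1 by
      simp [h, Complex.exp_sub, hL, Circle.coe_exp])
    exact ⟨n, by simp [hn]⟩
  have hconst : h (2 * Real.pi) = h 0 :=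
    isPreconnected_univ.constant_of_mapsTo
      (SetLike.isDiscrete_iff_discreteTopology.2 (NormedSpace.discreteTopology_zmultiples _))
      (by fun_prop) hmaps trivial trivial
  simp [h, Circle.exp_two_pi, Real.pi_ne_zero] at hconst

instance unitInterval.contractibleSpace : ContractibleSpace unitInterval :=
  (convex_Icc (0 : ℝ) 1).contractibleSpace (Set.nonempty_Icc.2 zero_le_one)

instance unitInterval.locallyPathConnectedSpace : LocallyPathConnectedSpace unitInterval :=
  (convex_Icc (0 : ℝ) 1).locallyPathConnectedSpace

theorem unitInterval.one_add_div_two_mem {x : ℝ} (hx : |x| ≤ 1) : (1 + x) / 2 ∈ unitInterval := by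
  obtain ⟨h₁, h₂⟩ := abs_le.1 hx
  constructor <;> linarith

def unitSquareToComplex : C(unitInterval × unitInterval, ℂ) :=
  ⟨fun p => (2 * p.1 - 1 : ℝ) + (2 * p.2 - 1 : ℝ) * I, by fun_prop⟩

noncomputable def circleToUnitSquare : C(Circle, unitInterval × unitInterval) :=
  ⟨fun z => (⟨(1 + (z : ℂ).re) / 2, unitInterval.one_add_div_two_mem
      ((abs_re_le_norm _).trans_eq (Circle.norm_coe z))⟩,
    ⟨(1 + (z : ℂ).im) / 2, unitInterval.one_add_div_two_mem
      ((abs_im_le_norm _).trans_eq (Circle.norm_coe z))⟩), by fun_prop⟩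

theorem unitSquareToComplex_circleToUnitSquare (z : Circle) :
    unitSquareToComplex (circleToUnitSquare z) = z := by
  conv_rhs => rw [← re_add_im (z : ℂ)]
  simp only [unitSquareToComplex, circleToUnitSquare, ContinuousMap.coe_mk]
  push_cast
  ring

/-- The invertible elements of `C([0,1] × [0,1], ℂ)` are **not** dense: there is a continuous
complex-valued function on the unit square that cannot be uniformly approximated by
nowhere-vanishing continuous functions. -/
theorem not_dense_invertibles_continuousMap_unitSquare :
    ¬ Dense {f : C(unitInterval × unitInterval, ℂ) | IsUnit f} := by
  intro hd
  obtain ⟨g, hgf, hg⟩ := Metric.dense_iff.1 hd unitSquareToComplex 1 one_pos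
  have hg_log : g.HasLog :=
    g.hasLog_of_forall_ne_zero ((ContinuousMap.isUnit_iff_forall_ne_zero g).1 hg)
  have hclose (z : Circle) : ‖g (circleToUnitSquare z) - z‖ < ‖(z : ℂ)‖ := by
    rw [Circle.norm_coe, ← unitSquareToComplex_circleToUnitSquare z, ← dist_eq_norm]
    exact (ContinuousMap.dist_apply_le_dist _).trans_lt hgf
  exact Circle.not_hasLog_coe ((hg_log.comp circleToUnitSquare).of_norm_sub_lt hclose)
end
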